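/- arXiv:1706.04892 — 5 statements merged into one kernel-verified Lean document; each statement's English description precedes it below -/
import Mathlib

section
/- Let X be an n×m real matrix, S an m×m matrix, and α > 0. If the operator norm of (X Xᵀ + α I)^{-1/2} (X Xᵀ − X S Sᵀ Xᵀ) (X Xᵀ + α I)^{-1/2} is at most ε, then (1−ε) X Xᵀ − ε α I ⪯ X S Sᵀ Xᵀ ⪯ (1+ε) X Xᵀ + ε α I in the positive semidefinite (Loewner) order. -/
/-!
Write `B = X Xᵀ + α I`, `R = B^{1/2}` and `M = X Xᵀ - X S Sᵀ Xᵀ`. For a Hermitian matrix `C`,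
`‖C‖ ≤ ε` gives `-ε I ⪯ C ⪯ ε I`; applied to `C = R⁻¹ M R⁻¹` and transported by the congruence
`C ↦ R C R`, which preserves `⪯`, this yields `-ε B ⪯ M ⪯ ε B`. Since `α > 0`, `B` and hence `R`
are invertible, and expanding `B` in the two inequalities gives the claim.
-/

open Matrix
open scoped Matrix.Norms.L2Operator

/-- The positive semidefinite square root of a positive semidefinite matrix
(removed from Mathlib; restored with its December 2024 definition). -/
noncomputable def Matrix.PosSemidef.sqrt {n 𝕜 : Type*} [Fintype n] [RCLike 𝕜] [PartialOrder 𝕜] [DecidableEq n]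
    {A : Matrix n n 𝕜} (hA : A.PosSemidef) : Matrix n n 𝕜 :=
  (hA.1.eigenvectorUnitary : Matrix n n 𝕜) *
    diagonal ((fun x : ℝ => (x : 𝕜)) ∘ (√·) ∘ hA.1.eigenvalues) *
    (star hA.1.eigenvectorUnitary : Matrix n n 𝕜)

namespace Matrix

open scoped ComplexOrder

variable {ι 𝕜 : Type*} [Fintype ι] [DecidableEq ι] [RCLike 𝕜] {A : Matrix ι ι 𝕜}

lemma PosSemidef.posSemidef_sqrt (hA : A.PosSemidef) : hA.sqrt.PosSemidef := by
  have hD : (diagonal ((fun x : ℝ => (x : 𝕜)) ∘ (√·) ∘ hA.1.eigenvalues)).PosSemidef :=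
    posSemidef_diagonal_iff.mpr fun i => by simp [Real.sqrt_nonneg]
  simpa [PosSemidef.sqrt, Unitary.coe_star, star_eq_conjTranspose, Matrix.mul_assoc] using
    hD.mul_mul_conjTranspose_same (hA.1.eigenvectorUnitary : Matrix ι ι 𝕜)

lemma PosSemidef.sqrt_mul_self (hA : A.PosSemidef) : hA.sqrt * hA.sqrt = A := by
  conv_rhs => rw [hA.1.spectral_theorem, Unitary.conjStarAlgAut_apply]
  simp only [PosSemidef.sqrt, Matrix.mul_assoc]
  rw [← Matrix.mul_assoc (star _ : Matrix ι ι 𝕜), Unitary.coe_star_mul_self, Matrix.one_mul,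
    ← Matrix.mul_assoc (diagonal _), diagonal_mul_diagonal]
  congr 3; funext i
  simp [← RCLike.ofReal_mul, Real.mul_self_sqrt (hA.eigenvalues_nonneg i)]

lemma PosSemidef.isUnit_sqrt (hA : A.PosSemidef) (hA' : IsUnit A) : IsUnit hA.sqrt := by
  rw [isUnit_iff_isUnit_det] at hA' ⊢
  exact isUnit_of_mul_isUnit_left (by rwa [← det_mul, hA.sqrt_mul_self])

lemma IsHermitian.posSemidef_smul_one_sub_of_norm_le {C : Matrix ι ι 𝕜} (hC : C.IsHermitian)
    {ε : ℝ} (h : ‖C‖ ≤ ε) : (ε • (1 : Matrix ι ι 𝕜) - C).PosSemidef := by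
  rw [← isPositive_toEuclideanLin_iff]
  refine ⟨isSymmetric_toEuclideanLin_iff.mpr ((isHermitian_one.smul (.all ε)).sub hC), fun x => ?_⟩
  have hε : toEuclideanLin (ε • 1 : Matrix ι ι 𝕜) x = (ε : 𝕜) • x := by
    ext i; simp [smul_mulVec]
  rw [map_sub, LinearMap.sub_apply, inner_sub_left, map_sub, sub_nonneg, hε, inner_smul_real_left,
    RCLike.smul_re, inner_self_eq_norm_sq]
  calc RCLike.re (inner 𝕜 (C.toEuclideanLin x) x) ≤ ‖C.toEuclideanLin x‖ * ‖x‖ :=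
        re_inner_le_norm _ _
    _ ≤ (ε * ‖x‖) * ‖x‖ := by
        gcongr
        exact (C.l2_opNorm_mulVec x).trans (mul_le_mul_of_nonneg_right h (norm_nonneg x))
    _ = ε • ‖x‖ ^ 2 := by rw [smul_eq_mul]; ring

lemma IsHermitian.posSemidef_smul_mul_self_sub_of_norm_inv_mul_mul_inv_le {R M : Matrix ι ι 𝕜}
    (hR : R.IsHermitian) (hRu : IsUnit R) (hM : M.IsHermitian) {ε : ℝ}
    (h : ‖R⁻¹ * M * R⁻¹‖ ≤ ε) : (ε • (R * R) - M).PosSemidef := by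
  have hC : (R⁻¹ * M * R⁻¹).IsHermitian := by
    simpa [hR.inv.eq, Matrix.mul_assoc] using isHermitian_mul_mul_conjTranspose R⁻¹ hM
  have hRR : R * R⁻¹ = 1 := mul_nonsing_inv R ((isUnit_iff_isUnit_det R).mp hRu)
  have hRR' : R⁻¹ * R = 1 := nonsing_inv_mul R ((isUnit_iff_isUnit_det R).mp hRu)
  convert (hC.posSemidef_smul_one_sub_of_norm_le h).mul_mul_conjTranspose_same R using 1
  simp only [hR.eq, Matrix.mul_sub, Matrix.sub_mul, Matrix.mul_smul, Matrix.smul_mul, Matrix.mul_one,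
    ← Matrix.mul_assoc, hRR, Matrix.one_mul]
  simp only [Matrix.mul_assoc, hRR', Matrix.mul_one]

end Matrix

theorem stmt_2_general {n m : ℕ} (X : Matrix (Fin n) (Fin m) ℝ) (S : Matrix (Fin m) (Fin m) ℝ)
    (α ε : ℝ) (hα : 0 < α)
    (hA : (X * Xᵀ + α • (1 : Matrix (Fin n) (Fin n) ℝ)).PosSemidef)
    (h : ‖hA.sqrt⁻¹ * (X * Xᵀ - X * S * Sᵀ * Xᵀ) * hA.sqrt⁻¹‖ ≤ ε) :
    (X * S * Sᵀ * Xᵀ - ((1 - ε) • (X * Xᵀ) - (ε * α) • (1 : Matrix (Fin n) (Fin n) ℝ))).PosSemidef ∧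
    ((1 + ε) • (X * Xᵀ) + (ε * α) • (1 : Matrix (Fin n) (Fin n) ℝ) - X * S * Sᵀ * Xᵀ).PosSemidef := by
  have hXX : (X * Xᵀ).PosSemidef := by
    simpa using posSemidef_self_mul_conjTranspose X
  have hXSSX : (X * S * Sᵀ * Xᵀ).PosSemidef := by
    simpa [Matrix.mul_assoc] using posSemidef_self_mul_conjTranspose (X * S)
  have hB : (X * Xᵀ + α • (1 : Matrix (Fin n) (Fin n) ℝ)).PosDef :=
    (PosDef.one.smul hα).posSemidef_add hXX
  have hR := hA.posSemidef_sqrt.isHermitian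
  have hRu := hA.isUnit_sqrt hB.isUnit
  have hM := hXX.isHermitian.sub hXSSX.isHermitian
  have upper : (ε • (hA.sqrt * hA.sqrt) - (X * Xᵀ - X * S * Sᵀ * Xᵀ)).PosSemidef :=
    hR.posSemidef_smul_mul_self_sub_of_norm_inv_mul_mul_inv_le hRu hM h
  have lower : (ε • (hA.sqrt * hA.sqrt) - -(X * Xᵀ - X * S * Sᵀ * Xᵀ)).PosSemidef :=
    hR.posSemidef_smul_mul_self_sub_of_norm_inv_mul_mul_inv_le hRu hM.neg
      (by rwa [Matrix.mul_neg, Matrix.neg_mul, norm_neg])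
  rw [hA.sqrt_mul_self] at upper lower
  constructor
  · convert upper using 1; module
  · convert lower using 1; module

theorem stmt_2 {n m : ℕ} (X : Matrix (Fin n) (Fin m) ℝ) (S : Matrix (Fin m) (Fin m) ℝ)
    (α ε : ℝ) (hα : 0 < α) (hε : 0 ≤ ε)
    (hA : (X * Xᵀ + α • (1 : Matrix (Fin n) (Fin n) ℝ)).PosSemidef)
    (h : ‖hA.sqrt⁻¹ * (X * Xᵀ - X * S * Sᵀ * Xᵀ) * hA.sqrt⁻¹‖ ≤ ε) :
    (X * S * Sᵀ * Xᵀ - ((1 - ε) • (X * Xᵀ) - (ε * α) • (1 : Matrix (Fin n) (Fin n) ℝ))).PosSemidef ∧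
    ((1 + ε) • (X * Xᵀ) + (ε * α) • (1 : Matrix (Fin n) (Fin n) ℝ) - X * S * Sᵀ * Xᵀ).PosSemidef :=
  stmt_2_general X S α ε hα hA h
end

section
/- Let K be an n×n positive semidefinite matrix with operator norm ‖K‖ and α > 0, and define the effective dimension d_eff(α) = Tr(K (K + α I)⁻¹). Then log det(K/α + I) ≤ d_eff(α) · (1 + log(‖K‖/α + 1)). -/
/-!
Both sides are spectral functions of `K`: `α⁻¹ • K + 1` and `K * (K + α • 1)⁻¹` are `f K` for
`f x = x / α + 1` and `f x = x / (x + α)`, so the inequality reduces to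
`log (λ / α + 1) ≤ λ / (λ + α) * (1 + log (‖K‖ / α + 1))` for each eigenvalue `0 ≤ λ ≤ ‖K‖`.
Split `log (λ / α + 1)` with weights `α / (λ + α)` and `λ / (λ + α)`; bound the first part by
`λ / α` (from `log y ≤ y - 1`) and the second by monotonicity of `log`.
-/

open Matrix
open scoped Matrix.Norms.L2Operator

lemma Real.log_div_add_one_le_mul {x M α : ℝ} (hα : 0 < α) (hx : 0 ≤ x) (hxM : x ≤ M) :
    Real.log (x / α + 1) ≤ x / (x + α) * (1 + Real.log (M / α + 1)) := by
  have hxα : 0 < x + α := by positivity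
  have hlog_le : Real.log (x / α + 1) ≤ x / α := by
    linarith [Real.log_le_sub_one_of_pos (x := x / α + 1) (by positivity)]
  have hlog_mono : Real.log (x / α + 1) ≤ Real.log (M / α + 1) := by gcongr
  calc Real.log (x / α + 1)
      = α / (x + α) * Real.log (x / α + 1) + x / (x + α) * Real.log (x / α + 1) := by
        field_simp; ring
    _ ≤ α / (x + α) * (x / α) + x / (x + α) * Real.log (M / α + 1) := by gcongr
    _ = x / (x + α) * (1 + Real.log (M / α + 1)) := by field_simp

namespace Matrix

variable {𝕜 n : Type*} [RCLike 𝕜] [Fintype n] [DecidableEq n] {A : Matrix n n 𝕜}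

namespace IsHermitian

lemma det_cfc (hA : A.IsHermitian) (f : ℝ → ℝ) :
    (cfc f A).det = ∏ i, (f (hA.eigenvalues i) : 𝕜) := by
  simp [hA.cfc_eq, IsHermitian.cfc, -Unitary.conjStarAlgAut_apply]

lemma trace_cfc (hA : A.IsHermitian) (f : ℝ → ℝ) :
    (cfc f A).trace = ∑ i, (f (hA.eigenvalues i) : 𝕜) := by
  simp [hA.cfc_eq, IsHermitian.cfc, -Unitary.conjStarAlgAut_apply]

lemma eigenvalues_le_l2_opNorm (hA : A.IsHermitian) (i : n) : hA.eigenvalues i ≤ ‖A‖ := by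
  have : Nonempty n := ⟨i⟩
  have hmem : (hA.eigenvalues i : 𝕜) ∈ spectrum 𝕜 A :=
    (spectrum.algebraMap_mem_iff 𝕜).mpr (hA.eigenvalues_mem_spectrum_real i)
  calc hA.eigenvalues i ≤ ‖(hA.eigenvalues i : 𝕜)‖ := by
        rw [RCLike.norm_ofReal]; exact le_abs_self _
    _ ≤ ‖A‖ := spectrum.norm_le_norm_of_mem hmem

end IsHermitian

open scoped ComplexOrder MatrixOrder in
lemma PosSemidef.inv_add_smul_one_eq_cfc (hA : A.PosSemidef) {α : ℝ} (hα : 0 < α) :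
    (A + α • (1 : Matrix n n 𝕜))⁻¹ = cfc (fun x => (x + α)⁻¹) A := by
  have hsa : IsSelfAdjoint A := hA.1
  have hshift : A + α • (1 : Matrix n n 𝕜) = cfc (fun x => x + α) A := by
    rw [cfc_add_const α _ A, cfc_id' ℝ A, Algebra.algebraMap_eq_smul_one]
  refine inv_eq_left_inv ?_
  rw [hshift, ← cfc_mul _ _ A (finite_real_spectrum.continuousOn _), ← cfc_one ℝ A]
  refine cfc_congr fun x hx => ?_
  have := spectrum_nonneg_of_nonneg hA.nonneg hx
  exact inv_mul_cancel₀ (by positivity)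

end Matrix

theorem stmt_4 {n : ℕ} (K : Matrix (Fin n) (Fin n) ℝ) (hK : K.PosSemidef)
    (α : ℝ) (hα : 0 < α) :
    Real.log ((α⁻¹ • K + (1 : Matrix (Fin n) (Fin n) ℝ)).det) ≤
      (K * (K + α • (1 : Matrix (Fin n) (Fin n) ℝ))⁻¹).trace *
        (1 + Real.log (‖K‖ / α + 1)) := by
  have hsa : IsSelfAdjoint K := hK.1
  have hlhs : α⁻¹ • K + 1 = cfc (fun x => x / α + 1) K := by
    simp only [div_eq_inv_mul]
    rw [cfc_add_const 1 _ K, cfc_const_mul α⁻¹ _ K, cfc_id' ℝ K, Algebra.algebraMap_eq_smul_one,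
      one_smul]
  have hrhs : K * (K + α • 1)⁻¹ = cfc (fun x => x / (x + α)) K := by
    simp only [div_eq_mul_inv]
    rw [cfc_mul _ _ K (hg := finite_real_spectrum.continuousOn _), cfc_id' ℝ K, hK.inv_add_smul_one_eq_cfc hα]
  rw [hlhs, hrhs, hK.1.det_cfc, hK.1.trace_cfc, Real.log_prod fun i _ => ?_, Finset.sum_mul]
  · exact Finset.sum_le_sum fun i _ => Real.log_div_add_one_le_mul hα (hK.eigenvalues_nonneg i)
      (hK.1.eigenvalues_le_l2_opNorm i)
  · have := hK.eigenvalues_nonneg i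
    positivity
end

section
/- Let φ₁,…,φ_T be vectors in a real inner product space with ‖φ_t‖ ≤ 1 for all t, let Φ_t denote the operator whose columns are φ₁,…,φ_t, let α > 0, and define the online ridge leverage scores τ_{t,t} = φ_tᵀ (Φ_t Φ_tᵀ + α I)⁻¹ φ_t. Then Σ_{t=1}^T τ_{t,t} ≤ log det(K_T/α + I), where K_T is the T×T Gram matrix with entries [K_T]_{ij} = ⟨φ_i, φ_j⟩. -/
/-!
With `V_t = Σ_{s ≤ t} φ_s φ_sᵀ + α I`, the matrix determinant lemma gives
`det V_{t-1} = det V_t · (1 - τ_{t,t})`, so `log (1 - τ_{t,t}) ≤ -τ_{t,t}` bounds each score by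
`log det V_t - log det V_{t-1}`. The sum telescopes to `log det V_T - log det (α I)`, and the
Weinstein–Aronszajn identity `det (ΦᵀΦ/α + I) = det (ΦΦᵀ/α + I)` turns this into the
log-determinant of the Gram matrix.
-/

open Matrix Finset

namespace Matrix

variable {m n R : Type*}

theorem det_sub_vecMulVec [Fintype m] [DecidableEq m] [CommRing R] {A : Matrix m m R}
    (hA : IsUnit A.det) (u v : m → R) :
    (A - vecMulVec u v).det = A.det * (1 - v ⬝ᵥ (A⁻¹ *ᵥ u)) := by
  rw [sub_eq_add_neg, ← neg_vecMulVec, vecMulVec_eq Unit, det_add_replicateCol_mul_replicateRow hA,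
    Matrix.mul_assoc, ← replicateCol_mulVec, det_unique (n := Unit)]
  simp [sub_eq_add_neg, mulVec_neg]

theorem sum_vecMulVec_self_eq_transpose_mul [Fintype m] [CommSemiring R] (x : m → n → R) :
    ∑ s, vecMulVec (x s) (x s) = (of x)ᵀ * of x := by
  ext i j
  simp [mul_apply, vecMulVec_apply, sum_apply]

theorem det_inv_smul_mul_transpose_add_one [Fintype m] [Fintype n] [DecidableEq m]
    [DecidableEq n] [Field R] (M : Matrix m n R) {α : R} (hα : α ≠ 0) :
    (α⁻¹ • (M * Mᵀ) + 1).det = (Mᵀ * M + α • 1).det / (α • (1 : Matrix n n R)).det := by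
  have hscale : Mᵀ * M + α • 1 = α • (Mᵀ * (α⁻¹ • M) + 1) := by
    rw [smul_add, Matrix.mul_smul, smul_smul, mul_inv_cancel₀ hα, one_smul]
  rw [hscale, det_smul, det_smul, det_one, mul_one, mul_div_cancel_left₀ _ (pow_ne_zero _ hα),
    ← det_mul_add_one_comm, Matrix.smul_mul]

theorem PosDef.dotProduct_inv_add_vecMulVec_mulVec_le_log_det_sub [Fintype m] [DecidableEq m]
    {A : Matrix m m ℝ} (hA : A.PosDef) (u : m → ℝ) :
    u ⬝ᵥ ((A + vecMulVec u u)⁻¹ *ᵥ u) ≤ Real.log (A + vecMulVec u u).det - Real.log A.det := by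
  set B := A + vecMulVec u u
  set x := u ⬝ᵥ (B⁻¹ *ᵥ u)
  have hB : B.PosDef := hA.add_posSemidef (by simpa using posSemidef_vecMulVec_self_star u)
  have hdet : A.det = B.det * (1 - x) := by
    rw [← det_sub_vecMulVec ((isUnit_iff_isUnit_det B).mp hB.isUnit), add_sub_cancel_right]
  have hx : 0 < 1 - x := pos_of_mul_pos_right (hdet ▸ hA.det_pos) hB.det_pos.le
  have hlog : Real.log (1 - x) ≤ -x := by linarith [Real.log_le_sub_one_of_pos hx]
  rw [hdet, Real.log_mul hB.det_pos.ne' hx.ne']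
  linarith

noncomputable def prefixGram {T : ℕ} (V₀ : Matrix m m ℝ) (x : Fin T → m → ℝ) (k : ℕ) :
    Matrix m m ℝ :=
  ∑ s ∈ univ.filter (fun s : Fin T => (s : ℕ) < k), vecMulVec (x s) (x s) + V₀

section prefixGram

variable {T : ℕ} {V₀ : Matrix m m ℝ} (x : Fin T → m → ℝ)

theorem prefixGram_zero : prefixGram V₀ x 0 = V₀ := by
  simp [prefixGram]

theorem prefixGram_eq_sum_le (t : Fin T) :
    prefixGram V₀ x (t + 1) = ∑ s ∈ univ.filter (· ≤ t), vecMulVec (x s) (x s) + V₀ := by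
  simp only [prefixGram, Nat.lt_succ_iff, Fin.val_fin_le]

theorem prefixGram_last : prefixGram V₀ x T = ∑ s, vecMulVec (x s) (x s) + V₀ := by
  simp [prefixGram]

theorem prefixGram_succ (t : Fin T) :
    prefixGram V₀ x (t + 1) = prefixGram V₀ x t + vecMulVec (x t) (x t) := by
  have hinsert : univ.filter (fun s : Fin T => (s : ℕ) < t + 1) =
      insert t (univ.filter (fun s : Fin T => (s : ℕ) < t)) := by
    ext s
    simp only [mem_filter, mem_univ, true_and, mem_insert, Fin.ext_iff]
    omega
  rw [prefixGram, prefixGram, hinsert, sum_insert (by simp)]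
  abel

theorem PosDef.prefixGram [Fintype m] (hV₀ : V₀.PosDef) (k : ℕ) :
    (prefixGram V₀ x k).PosDef :=
  hV₀.posSemidef_add <| posSemidef_sum _ fun s _ => by
    simpa using posSemidef_vecMulVec_self_star (x s)

end prefixGram

theorem sum_dotProduct_inv_mulVec_le_log_det_sub [Fintype m] [DecidableEq m] {T : ℕ}
    (x : Fin T → m → ℝ) {V₀ : Matrix m m ℝ} (hV₀ : V₀.PosDef) :
    ∑ t, x t ⬝ᵥ ((∑ s ∈ univ.filter (· ≤ t), vecMulVec (x s) (x s) + V₀)⁻¹ *ᵥ x t) ≤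
      Real.log (∑ s, vecMulVec (x s) (x s) + V₀).det - Real.log V₀.det := by
  set g : ℕ → ℝ := fun k => Real.log (prefixGram V₀ x k).det
  calc ∑ t, x t ⬝ᵥ ((∑ s ∈ univ.filter (· ≤ t), vecMulVec (x s) (x s) + V₀)⁻¹ *ᵥ x t)
      ≤ ∑ t : Fin T, (g (t + 1) - g t) := by
        refine sum_le_sum fun t _ => ?_
        rw [← prefixGram_eq_sum_le]
        simp only [g, prefixGram_succ]
        exact (hV₀.prefixGram x t).dotProduct_inv_add_vecMulVec_mulVec_le_log_det_sub (x t)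
    _ = g T - g 0 := by
        rw [Fin.sum_univ_eq_sum_range (fun k => g (k + 1) - g k), sum_range_sub]
    _ = _ := by simp only [g, prefixGram_last, prefixGram_zero]

end Matrix

theorem stmt_6_general {T D : ℕ} (φ : Fin T → Fin D → ℝ)
    (α : ℝ) (hα : 0 < α)
    (K : Matrix (Fin T) (Fin T) ℝ) (hK : ∀ i j, K i j = φ i ⬝ᵥ φ j) :
    ∑ t, φ t ⬝ᵥ
        (((∑ s ∈ Finset.univ.filter (fun s => s ≤ t), vecMulVec (φ s) (φ s))
            + α • (1 : Matrix (Fin D) (Fin D) ℝ))⁻¹ *ᵥ φ t) ≤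
      Real.log ((α⁻¹ • K + (1 : Matrix (Fin T) (Fin T) ℝ)).det) := by
  have hKφ : K = of φ * (of φ)ᵀ := by
    ext i j
    simp [hK, mul_apply, dotProduct]
  have hαI : (α • (1 : Matrix (Fin D) (Fin D) ℝ)).PosDef := PosDef.one.smul hα
  calc _ ≤ Real.log (∑ s, vecMulVec (φ s) (φ s) + α • 1).det
          - Real.log (α • (1 : Matrix (Fin D) (Fin D) ℝ)).det :=
        sum_dotProduct_inv_mulVec_le_log_det_sub φ hαI
    _ = Real.log ((α⁻¹ • K + 1).det) := by
        rw [hKφ, det_inv_smul_mul_transpose_add_one _ hα.ne', ← sum_vecMulVec_self_eq_transpose_mul,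
          Real.log_div (prefixGram_last φ ▸ hαI.prefixGram φ T).det_pos.ne' hαI.det_pos.ne']

theorem stmt_6 {T D : ℕ} (φ : Fin T → Fin D → ℝ)
    (hφ : ∀ t, φ t ⬝ᵥ φ t ≤ 1) (α : ℝ) (hα : 0 < α)
    (K : Matrix (Fin T) (Fin T) ℝ) (hK : ∀ i j, K i j = φ i ⬝ᵥ φ j) :
    ∑ t, φ t ⬝ᵥ
        (((∑ s ∈ Finset.univ.filter (fun s => s ≤ t), vecMulVec (φ s) (φ s))
            + α • (1 : Matrix (Fin D) (Fin D) ℝ))⁻¹ *ᵥ φ t) ≤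
      Real.log ((α⁻¹ • K + (1 : Matrix (Fin T) (Fin T) ℝ)).det) :=
  stmt_6_general φ α hα K hK
end

section
/- Let K be an n×n positive semidefinite matrix, D an invertible n×n diagonal matrix with diagonal entries d_i satisfying d_i² ≤ c for all i, and α > 0. Then Tr(D K D (D K D + α I)⁻¹) ≤ Tr(K (K + (α/c) I)⁻¹). -/
/-!
Write `K = S * S` with `S = √K`. Then `D K D = (D S) (S D)` has the same nonzero spectrum as
`S D² S`, hence the same effective dimension `Tr (X (X + α)⁻¹) = n - α Tr ((X + α)⁻¹)`. Since
`S D² S ≤ c K` in the Loewner order and inversion reverses that order, the effective dimension is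
at most that of `c K` at level `α`, which is the effective dimension of `K` at level `α / c`.
-/

open Matrix

namespace Matrix

variable {m n 𝕜 : Type*} [Fintype m] [Fintype n] [DecidableEq m] [DecidableEq n] [Field 𝕜]

noncomputable def effectiveDim (α : 𝕜) (X : Matrix n n 𝕜) : 𝕜 :=
  (X * (X + α • 1)⁻¹).trace

theorem isUnit_det_mul_add_smul_one_comm (A : Matrix m n 𝕜) (B : Matrix n m 𝕜) {α : 𝕜}
    (hα : α ≠ 0) : IsUnit (A * B + α • 1).det ↔ IsUnit (B * A + α • 1).det := by
  have hAB : A * B + α • 1 = α • (1 + (α⁻¹ • A) * B) := by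
    rw [smul_add, smul_mul, smul_smul, mul_inv_cancel₀ hα, one_smul, add_comm]
  have hBA : B * A + α • 1 = α • (1 + B * (α⁻¹ • A)) := by
    rw [smul_add, Matrix.mul_smul, smul_smul, mul_inv_cancel₀ hα, one_smul, add_comm]
  have hunit : ∀ k, IsUnit (α ^ k) := fun k ↦ (Ne.isUnit hα).pow k
  rw [hAB, hBA, det_smul, det_smul, det_one_add_mul_comm, IsUnit.mul_iff, IsUnit.mul_iff,
    and_iff_right (hunit _), and_iff_right (hunit _)]

theorem mul_inv_mul_add_smul_one (A : Matrix m n 𝕜) (B : Matrix n m 𝕜) {α : 𝕜} (hα : α ≠ 0) :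
    A * (B * A + α • 1)⁻¹ = (A * B + α • 1)⁻¹ * A := by
  by_cases h : IsUnit (A * B + α • 1).det
  · have := invertibleOfIsUnitDet _ h
    have := invertibleOfIsUnitDet _ ((isUnit_det_mul_add_smul_one_comm A B hα).mp h)
    rw [mul_inv_eq_iff_eq_mul_of_invertible, Matrix.mul_assoc, eq_comm,
      inv_mul_eq_iff_eq_mul_of_invertible]
    simp only [Matrix.mul_add, Matrix.add_mul, Matrix.mul_assoc, Matrix.mul_smul,
      Matrix.smul_mul, Matrix.mul_one, Matrix.one_mul]
  · rw [nonsing_inv_apply_not_isUnit _ h,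
      nonsing_inv_apply_not_isUnit _ (mt (isUnit_det_mul_add_smul_one_comm A B hα).mpr h),
      Matrix.mul_zero, Matrix.zero_mul]

theorem effectiveDim_mul_comm (A : Matrix m n 𝕜) (B : Matrix n m 𝕜) {α : 𝕜} (hα : α ≠ 0) :
    effectiveDim α (A * B) = effectiveDim α (B * A) := by
  unfold effectiveDim
  rw [Matrix.mul_assoc, trace_mul_comm, Matrix.mul_assoc, ← mul_inv_mul_add_smul_one A B hα,
    Matrix.mul_assoc]

theorem effectiveDim_eq_card_sub {α : 𝕜} {X : Matrix n n 𝕜} (h : IsUnit (X + α • 1).det) :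
    effectiveDim α X = Fintype.card n - α * ((X + α • 1)⁻¹).trace := by
  have hX : X = (X + α • 1) - α • 1 := (add_sub_cancel_right X _).symm
  rw [effectiveDim, hX, sub_add_cancel, Matrix.sub_mul, mul_nonsing_inv _ h, smul_mul,
    Matrix.one_mul, trace_sub, trace_smul, trace_one, smul_eq_mul]

theorem effectiveDim_smul {c : 𝕜} (hc : c ≠ 0) (α : 𝕜) (X : Matrix n n 𝕜) :
    effectiveDim α (c • X) = effectiveDim (α / c) X := by
  have hsum : c • X + α • 1 = c • (X + (α / c) • 1) := by
    rw [smul_add, smul_smul, mul_div_cancel₀ _ hc]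
  have hinv : (c • X + α • 1)⁻¹ = c⁻¹ • (X + (α / c) • 1)⁻¹ := by
    by_cases h : IsUnit (X + (α / c) • 1).det
    · rw [hsum]
      exact inv_smul' _ (Units.mk0 c hc) h
    · have h' : ¬IsUnit (c • (X + (α / c) • 1)).det := by
        rwa [det_smul, IsUnit.mul_iff, and_iff_right ((Ne.isUnit hc).pow _)]
      rw [hsum, nonsing_inv_apply_not_isUnit _ h, nonsing_inv_apply_not_isUnit _ h', smul_zero]
  rw [effectiveDim, effectiveDim, hinv, Matrix.smul_mul, Matrix.mul_smul, smul_smul,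
    mul_inv_cancel₀ hc, one_smul]

section Ordered

variable [PartialOrder 𝕜] [StarRing 𝕜] [StarOrderedRing 𝕜]

theorem PosDef.posSemidef_inv_sub_inv {A B : Matrix n n 𝕜} (hA : A.PosDef)
    (hAB : (B - A).PosSemidef) : (A⁻¹ - B⁻¹).PosSemidef := by
  have hB : B.PosDef := by simpa using hA.add_posSemidef hAB
  have := hA.isUnit.invertible
  have := hB.isUnit.invertible
  have := hA.inv.isUnit.invertible
  -- `fromBlocks B 1 1 A⁻¹` has Schur complements `B - A` and `A⁻¹ - B⁻¹`
  have hblock : (fromBlocks B 1 1ᴴ A⁻¹).PosSemidef := by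
    rw [PosDef.fromBlocks₂₂ _ _ hA.inv, inv_inv_of_invertible]
    simpa using hAB
  simpa using (PosDef.fromBlocks₁₁ _ _ hB).mp hblock

theorem effectiveDim_mono [IsOrderedRing 𝕜] {α : 𝕜} (hα : 0 < α) {X Y : Matrix n n 𝕜}
    (hX : X.PosSemidef) (hXY : (Y - X).PosSemidef) : effectiveDim α X ≤ effectiveDim α Y := by
  have hshift : (α • 1 : Matrix n n 𝕜).PosDef := PosDef.one.smul hα
  have hXα : (X + α • 1).PosDef := PosDef.posSemidef_add hX hshift
  have hYα : (Y + α • 1).PosDef := by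
    simpa using PosDef.posSemidef_add (hX.add hXY) hshift
  have htrace : ((Y + α • 1)⁻¹).trace ≤ ((X + α • 1)⁻¹).trace := by
    have := (hXα.posSemidef_inv_sub_inv (B := Y + α • 1)
      (by rwa [add_sub_add_right_eq_sub])).trace_nonneg
    rwa [trace_sub, sub_nonneg] at this
  rw [effectiveDim_eq_card_sub ((isUnit_iff_isUnit_det _).mp hXα.isUnit),
    effectiveDim_eq_card_sub ((isUnit_iff_isUnit_det _).mp hYα.isUnit)]
  gcongr

end Ordered

end Matrix

open scoped MatrixOrder in
theorem stmt_9_general {n : ℕ} (K : Matrix (Fin n) (Fin n) ℝ) (hK : K.PosSemidef)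
    (d : Fin n → ℝ) (c : ℝ) (hc : 0 < c)
    (hdc : ∀ i, d i ^ 2 ≤ c) (α : ℝ) (hα : 0 < α) :
    (Matrix.diagonal d * K * Matrix.diagonal d *
        (Matrix.diagonal d * K * Matrix.diagonal d
          + α • (1 : Matrix (Fin n) (Fin n) ℝ))⁻¹).trace ≤
      (K * (K + (α / c) • (1 : Matrix (Fin n) (Fin n) ℝ))⁻¹).trace := by
  set D := diagonal d
  set S := CFC.sqrt K
  have hS : IsSelfAdjoint S := (CFC.sqrt_nonneg K).isSelfAdjoint
  have hSS : S * S = K := CFC.sqrt_mul_sqrt_self K hK.nonneg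
  have hD2 : D * D ≤ c • 1 := by
    rw [le_iff, diagonal_mul_diagonal, smul_one_eq_diagonal, diagonal_sub,
      posSemidef_diagonal_iff]
    exact fun i ↦ sub_nonneg.mpr (by simpa [sq] using hdc i)
  have hM : 0 ≤ S * (D * D) * S :=
    hS.conjugate_nonneg (isHermitian_diagonal d).isSelfAdjoint.mul_self_nonneg
  have hMK : S * (D * D) * S ≤ c • K := by
    simpa [hSS] using hS.conjugate_le_conjugate hD2
  show effectiveDim α (D * K * D) ≤ effectiveDim (α / c) K
  calc effectiveDim α (D * K * D) = effectiveDim α ((D * S) * (S * D)) := by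
        simp only [← hSS, Matrix.mul_assoc]
    _ = effectiveDim α ((S * D) * (D * S)) := effectiveDim_mul_comm _ _ hα.ne'
    _ ≤ effectiveDim α (c • K) := by
        simpa only [Matrix.mul_assoc] using effectiveDim_mono hα hM.posSemidef hMK
    _ = effectiveDim (α / c) K := effectiveDim_smul hc.ne' α K

theorem stmt_9 {n : ℕ} (K : Matrix (Fin n) (Fin n) ℝ) (hK : K.PosSemidef)
    (d : Fin n → ℝ) (hd : ∀ i, d i ≠ 0) (c : ℝ) (hc : 0 < c)
    (hdc : ∀ i, d i ^ 2 ≤ c) (α : ℝ) (hα : 0 < α) :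
    (Matrix.diagonal d * K * Matrix.diagonal d *
        (Matrix.diagonal d * K * Matrix.diagonal d
          + α • (1 : Matrix (Fin n) (Fin n) ℝ))⁻¹).trace ≤
      (K * (K + (α / c) • (1 : Matrix (Fin n) (Fin n) ℝ))⁻¹).trace :=
  stmt_9_general K hK d c hc hdc α hα
end

section
/- Let φ₁,…,φ_t be unit-norm vectors, Φ_s the matrix with columns φ₁,…,φ_s, α > 0, and S_s a diagonal selection matrix such that Φ_s S_s S_sᵀ Φ_sᵀ ⪯ Φ_t Φ_tᵀ + ε(Φ_t Φ_tᵀ + αI) for some ε ≥ 0 (where S_s is zero-padded to size t). Then for any s ≤ t, the estimated leverage score (1+ε)·φ_sᵀ(Φ_s S_s S_sᵀ Φ_sᵀ + αI)⁻¹ φ_s is at least the true leverage score φ_sᵀ(Φ_t Φ_tᵀ + αI)⁻¹ φ_s. -/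
/-!
The hypothesis says `P + αI ⪯ (1 + ε)(A + αI)` in the Loewner order. Inversion is antitone on
positive definite matrices, as seen from the variational formula
`vᵀ M⁻¹ v = max_x (2 xᵀv - xᵀ M x)` (attained at `x = M⁻¹ v`), so
`vᵀ ((1 + ε)(A + αI))⁻¹ v ≤ vᵀ (P + αI)⁻¹ v`, and pulling out the scalar gives the claim.
-/

open Matrix

namespace Matrix

variable {n : Type*} [Fintype n] [DecidableEq n]

lemma PosDef.two_mul_dotProduct_sub_le_dotProduct_inv_mulVec {M : Matrix n n ℝ} (hM : M.PosDef)
    (x v : n → ℝ) : 2 * (x ⬝ᵥ v) - x ⬝ᵥ (M *ᵥ x) ≤ v ⬝ᵥ (M⁻¹ *ᵥ v) := by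
  set u := M⁻¹ *ᵥ v
  have hMu : M *ᵥ u = v := by
    rw [mulVec_mulVec, mul_nonsing_inv _ hM.det_pos.ne'.isUnit, one_mulVec]
  have hsymm : u ⬝ᵥ (M *ᵥ x) = v ⬝ᵥ x := by
    rw [dotProduct_mulVec, ← mulVec_transpose, show Mᵀ = M from hM.isHermitian, hMu]
  have hnonneg : 0 ≤ (x - u) ⬝ᵥ (M *ᵥ (x - u)) := hM.posSemidef.dotProduct_mulVec_nonneg _
  rw [mulVec_sub, dotProduct_sub, sub_dotProduct, sub_dotProduct, hMu, hsymm,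
    dotProduct_comm v x, dotProduct_comm u v] at hnonneg
  linarith

lemma PosDef.dotProduct_inv_mulVec_le_of_posSemidef_sub {M N : Matrix n n ℝ} (hM : M.PosDef)
    (hN : N.PosDef) (hMN : (N - M).PosSemidef) (v : n → ℝ) :
    v ⬝ᵥ (N⁻¹ *ᵥ v) ≤ v ⬝ᵥ (M⁻¹ *ᵥ v) := by
  set x := N⁻¹ *ᵥ v
  have hNx : N *ᵥ x = v := by
    rw [mulVec_mulVec, mul_nonsing_inv _ hN.det_pos.ne'.isUnit, one_mulVec]
  have hquad_le : x ⬝ᵥ (M *ᵥ x) ≤ x ⬝ᵥ (N *ᵥ x) := by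
    have := hMN.dotProduct_mulVec_nonneg x
    rw [sub_mulVec, dotProduct_sub, star_trivial] at this
    linarith
  calc v ⬝ᵥ (N⁻¹ *ᵥ v) = 2 * (x ⬝ᵥ v) - x ⬝ᵥ (N *ᵥ x) := by
        rw [hNx, dotProduct_comm]; ring
    _ ≤ 2 * (x ⬝ᵥ v) - x ⬝ᵥ (M *ᵥ x) := by linarith
    _ ≤ v ⬝ᵥ (M⁻¹ *ᵥ v) := hM.two_mul_dotProduct_sub_le_dotProduct_inv_mulVec x v

lemma dotProduct_inv_smul_mulVec {M : Matrix n n ℝ} (hM : IsUnit M) {c : ℝ} (hc : c ≠ 0)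
    (v : n → ℝ) : v ⬝ᵥ ((c • M)⁻¹ *ᵥ v) = c⁻¹ * (v ⬝ᵥ (M⁻¹ *ᵥ v)) := by
  have := invertibleOfNonzero hc
  rw [inv_smul M c ((isUnit_iff_isUnit_det M).mp hM), invOf_eq_inv, smul_mulVec, dotProduct_smul,
    smul_eq_mul]

omit [Fintype n] in
lemma PosSemidef.add_smul_one_posDef {M : Matrix n n ℝ} (hM : M.PosSemidef) {α : ℝ}
    (hα : 0 < α) : (M + α • 1).PosDef :=
  PosDef.posSemidef_add hM (PosDef.one.smul hα)

end Matrix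

theorem stmt_18_general {T D : ℕ} (φ : Fin T → Fin D → ℝ)
    (α ε : ℝ) (hα : 0 < α) (hε : 0 ≤ ε)
    (w : Fin T → ℝ) (hw : ∀ i, 0 ≤ w i) (s : Fin T)
    (P : Matrix (Fin D) (Fin D) ℝ)
    (hP : P = ∑ i, w i • vecMulVec (φ i) (φ i))
    (A : Matrix (Fin D) (Fin D) ℝ)
    (hA : A = ∑ i, vecMulVec (φ i) (φ i))
    (happrox : (A + ε • (A + α • (1 : Matrix (Fin D) (Fin D) ℝ)) - P).PosSemidef) :
    φ s ⬝ᵥ ((A + α • (1 : Matrix (Fin D) (Fin D) ℝ))⁻¹ *ᵥ φ s) ≤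
      (1 + ε) * (φ s ⬝ᵥ ((P + α • (1 : Matrix (Fin D) (Fin D) ℝ))⁻¹ *ᵥ φ s)) := by
  have hA' : (A + α • 1).PosDef :=
    (hA ▸ posSemidef_sum _ fun i _ => posSemidef_vecMulVec_self_star (φ i)).add_smul_one_posDef hα
  have hP' : (P + α • 1).PosDef :=
    (hP ▸ posSemidef_sum _ fun i _ =>
      (posSemidef_vecMulVec_self_star (φ i)).smul (hw i)).add_smul_one_posDef hα
  have hε' : 0 < 1 + ε := by linarith
  have hle : ((1 + ε) • (A + α • 1) - (P + α • 1)).PosSemidef := by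
    convert happrox using 1; module
  have key := hP'.dotProduct_inv_mulVec_le_of_posSemidef_sub (hA'.smul hε') hle (φ s)
  rwa [dotProduct_inv_smul_mulVec hA'.isUnit hε'.ne', inv_mul_le_iff₀ hε'] at key

theorem stmt_18 {T D : ℕ} (φ : Fin T → Fin D → ℝ)
    (hφ : ∀ i, φ i ⬝ᵥ φ i = 1) (α ε : ℝ) (hα : 0 < α) (hε : 0 ≤ ε)
    (w : Fin T → ℝ) (hw : ∀ i, 0 ≤ w i) (s : Fin T)
    (hsupp : ∀ i, s < i → w i = 0)
    (P : Matrix (Fin D) (Fin D) ℝ)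
    (hP : P = ∑ i, w i • vecMulVec (φ i) (φ i))
    (A : Matrix (Fin D) (Fin D) ℝ)
    (hA : A = ∑ i, vecMulVec (φ i) (φ i))
    (happrox : (A + ε • (A + α • (1 : Matrix (Fin D) (Fin D) ℝ)) - P).PosSemidef) :
    φ s ⬝ᵥ ((A + α • (1 : Matrix (Fin D) (Fin D) ℝ))⁻¹ *ᵥ φ s) ≤
      (1 + ε) * (φ s ⬝ᵥ ((P + α • (1 : Matrix (Fin D) (Fin D) ℝ))⁻¹ *ᵥ φ s)) :=
  stmt_18_general φ α ε hα hε w hw s P hP A hA happrox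
end
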